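/- For any w ∈ W and any reduced word I_w of w, one has T_{I_w} = Σ_{v≤w} q_{I_w,v} δ_v in Q'_W, where all q_{I_w,v} ∈ Q', the sum is over v ≤ w in the Bruhat order, and the top coefficient is q_{I_w,w} = Π_{α∈Φ_w} (x_α − x_γ)/x_α. -/

import Mathlib

open scoped Classical
noncomputable section

/-- Truncation (up to degree `N` in each variable) of the double power series
`F(a,b) = Σ_{i,j} c i j • a^i b^j` of a coefficient family `c`, substituted at two
polynomials `a b` in three variables. -/
noncomputable def fglTrunc {R : Type} [CommRing R] (c : ℕ → ℕ → R) (N : ℕ)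
    (a b : MvPolynomial (Fin 3) R) : MvPolynomial (Fin 3) R :=
  ∑ p ∈ Finset.range N ×ˢ Finset.range N, MvPolynomial.C (c p.1 p.2) * a ^ p.1 * b ^ p.2

/-- A one-dimensional commutative formal group law `F(x,y) = Σ_{i,j} c i j x^i y^j`
over `R`, recorded by its coefficients.  Associativity is expressed through
arbitrarily high truncations. -/
structure FormalGroupLaw (R : Type) [CommRing R] where
  c : ℕ → ℕ → R
  c_comm : ∀ i j, c i j = c j i
  c_norm : c 1 0 = 1
  c_zero : ∀ i, i ≠ 1 → c i 0 = 0
  c_assoc : ∀ (N : ℕ) (d : Fin 3 →₀ ℕ), d 0 + d 1 + d 2 < N →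
    MvPolynomial.coeff d
      (fglTrunc c N (fglTrunc c N (MvPolynomial.X 0) (MvPolynomial.X 1)) (MvPolynomial.X 2)) =
    MvPolynomial.coeff d
      (fglTrunc c N (MvPolynomial.X 0) (fglTrunc c N (MvPolynomial.X 1) (MvPolynomial.X 2)))

/-- The whole setting of the paper: a generalized Cartan matrix together with its
root datum and Weyl group `W`, a Demazure lattice `Λ`, a one-dimensional commutative
formal group law `F` over `R`, the formal group algebra `S = R[[Λ]]_F` (presented by
its defining relations together with an `R`-algebra isomorphism with a multivariate
power series ring), the localization `Q` of `S` at the classes `x_α` of all positive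
roots, the twisted group algebra `Q_W = Q ⋊ R[W]` and its action on `Q`. -/
structure DemazureSetup (R : Type) [CommRing R] : Type 1 where
  /-- size of the generalized Cartan matrix -/
  n : ℕ
  /-- the Demazure lattice `Λ` -/
  Λ : Type
  [Λadd : AddCommGroup Λ]
  [Λfree : Module.Free ℤ Λ]
  [Λfin : Module.Finite ℤ Λ]
  /-- the Weyl group -/
  W : Type
  [Wgrp : Group W]
  [Wact : DistribMulAction W Λ]
  /-- the simple reflections -/
  s : Fin n → W
  s_sq : ∀ i, s i * s i = 1
  s_gen : Subgroup.closure (Set.range s) = ⊤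
  /-- the simple roots, viewed inside the Demazure lattice -/
  sroot : Fin n → Λ
  roots_indep : LinearIndependent ℤ sroot
  /-- pairing with the simple coroots: `scoroot i λ = ⟨λ, α_i^∨⟩ ∈ ℤ` -/
  scoroot : Fin n → (Λ →+ ℤ)
  /-- diagonal entries of the generalized Cartan matrix `a_{ii} = ⟨α_i, α_i^∨⟩ = 2` -/
  cartan_diag : ∀ i, scoroot i (sroot i) = 2
  /-- off-diagonal entries `a_{ij} = ⟨α_j, α_i^∨⟩` are nonpositive -/
  cartan_off : ∀ i j, i ≠ j → scoroot i (sroot j) ≤ 0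
  cartan_zero : ∀ i j, scoroot i (sroot j) = 0 ↔ scoroot j (sroot i) = 0
  /-- the simple reflections act by `s_i(λ) = λ - ⟨λ, α_i^∨⟩ α_i` -/
  s_act : ∀ (i : Fin n) (lam : Λ), s i • lam = lam - scoroot i lam • sroot i
  /-- `W` acts faithfully on `Λ` -/
  act_faithful : ∀ w : W, (∀ lam : Λ, w • lam = lam) → w = 1
  /-- every simple root can be extended to a `ℤ`-basis of `Λ` (Demazure lattice) -/
  basis_ext : ∀ i, ∃ (b : Module.Basis (Fin (Module.finrank ℤ Λ)) ℤ Λ) (j : Fin (Module.finrank ℤ Λ)),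
    b j = sroot i
  /-- the formal group law `F` -/
  fgl : FormalGroupLaw R
  /-- the formal group algebra `S = R[[Λ]]_F` -/
  S : Type
  [Scr : CommRing S]
  [Salg : Algebra R S]
  /-- the generators `x_λ`, `λ ∈ Λ`, of the formal group algebra -/
  x : Λ → S
  x_zero : x 0 = 0
  /-- the augmentation map `ε : S → R`, `x_λ ↦ 0` -/
  aug : S →ₐ[R] R
  aug_x : ∀ lam, aug (x lam) = 0
  /-- the defining relation `x_{λ+μ} = F(x_λ, x_μ)`, modulo every power of the
  augmentation ideal -/
  x_add : ∀ (lam mu : Λ) (N : ℕ),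
    x (lam + mu) - ∑ p ∈ Finset.range N ×ˢ Finset.range N,
      algebraMap R S (fgl.c p.1 p.2) * x lam ^ p.1 * x mu ^ p.2
    ∈ RingHom.ker aug.toRingHom ^ N
  /-- a `ℤ`-basis of `Λ` -/
  e : Module.Basis (Fin (Module.finrank ℤ Λ)) ℤ Λ
  /-- `S` is the power series ring on the `x`-classes of a basis of `Λ` -/
  ψ : S ≃ₐ[R] MvPowerSeries (Fin (Module.finrank ℤ Λ)) R
  ψ_x : ∀ j, ψ (x (e j)) = MvPowerSeries.X j
  aug_ψ : ∀ a : S, aug a = MvPowerSeries.constantCoeff (σ := Fin (Module.finrank ℤ Λ)) (R := R) (ψ a)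
  /-- the `W`-action on `S` induced by `w(x_λ) = x_{w(λ)}` -/
  [SWact : MulSemiringAction W S]
  smul_x : ∀ (w : W) (lam : Λ), w • x lam = x (w • lam)
  smul_algebraMap : ∀ (w : W) (r : R), w • (algebraMap R S r) = algebraMap R S r
  smul_IF : ∀ (w : W) (N : ℕ) (a : S),
    a ∈ RingHom.ker aug.toRingHom ^ N → w • a ∈ RingHom.ker aug.toRingHom ^ N
  /-- the localization `Q = S[1/x_α : α ∈ Φ₊]` -/
  Q : Type
  [Qcr : CommRing Q]
  [Qalg : Algebra S Q]
  loc : IsLocalization (Submonoid.closure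
    (x '' {v | (∃ (w : W) (i : Fin n), v = w • sroot i) ∧
               v ∈ (AddSubmonoid.closure (Set.range sroot) : AddSubmonoid Λ)})) Q
  /-- the induced `W`-action on `Q` -/
  [QWact : MulSemiringAction W Q]
  smul_SQ : ∀ (w : W) (a : S), w • (algebraMap S Q a) = algebraMap S Q (w • a)
  /-- the twisted group algebra `Q_W = Q ⋊_R R[W]` -/
  QW : Type
  [QWring : Ring QW]
  [QWalg : Algebra R QW]
  /-- the canonical inclusion `Q → Q_W`, `q ↦ q δ_e` -/
  ι : Q →+* QW
  /-- the canonical basis elements `δ_w` of `Q_W` -/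
  δ : W →* QW
  ι_alg : ∀ r : R, ι (algebraMap S Q (algebraMap R S r)) = algebraMap R QW r
  /-- the twisted commutation rule `δ_w · q = w(q) · δ_w` -/
  twist : ∀ (w : W) (q : Q), δ w * ι q = ι (w • q) * δ w
  /-- `Q_W` is a free left `Q`-module with basis `{δ_w}_{w ∈ W}` -/
  qw_free : ∀ z : QW, ∃! c : W →₀ Q, z = c.sum fun w q => ι q * δ w
  /-- the action of `Q_W` on `Q`, `(q δ_w) · q' = q · w(q')` -/
  act : QW → Q → Q
  act_addl : ∀ (z z' : QW) (q : Q), act (z + z') q = act z q + act z' q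
  act_spec : ∀ (q : Q) (w : W) (q' : Q), act (ι q * δ w) q' = q * (w • q')

namespace DemazureSetup

attribute [instance] Λadd Λfree Λfin Wgrp Wact Scr Salg SWact Qcr Qalg QWact QWring QWalg

variable {R : Type} [CommRing R] (D : DemazureSetup R)

/-- the set `Φ` of (real) roots -/
def roots : Set D.Λ := {v | ∃ (w : D.W) (i : Fin D.n), v = w • D.sroot i}

/-- the set `Φ₊` of positive roots -/
def posRoots : Set D.Λ :=
  {v | (∃ (w : D.W) (i : Fin D.n), v = w • D.sroot i) ∧
       v ∈ (AddSubmonoid.closure (Set.range D.sroot) : AddSubmonoid D.Λ)}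

/-- the set `Φ₋ = -Φ₊` of negative roots -/
def negRoots : Set D.Λ := {v | -v ∈ D.posRoots}

/-- the reflection `s_α ∈ W` associated to a real root `α` -/
def refl (v : D.Λ) : D.W :=
  if h : v ∈ D.roots then h.choose * D.s h.choose_spec.choose * h.choose⁻¹ else 1

/-- the product `s_{i_1} ⋯ s_{i_l}` of a word in the simple reflections -/
def wordProd (ω : List (Fin D.n)) : D.W := (ω.map D.s).prod

/-- the Coxeter length function on `W` -/
def len (w : D.W) : ℕ := sInf {l | ∃ ω : List (Fin D.n), ω.length = l ∧ D.wordProd ω = w}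

/-- `ω` is a reduced word for `w` -/
def IsReduced (w : D.W) (ω : List (Fin D.n)) : Prop :=
  D.wordProd ω = w ∧ ω.length = D.len w

/-- a choice of a reduced word `I_w` for every `w ∈ W` -/
def IsRedSystem (I : D.W → List (Fin D.n)) : Prop := ∀ w, D.IsReduced w (I w)

/-- the Bruhat order on `W` (subword characterization) -/
def bruhatLE (u w : D.W) : Prop :=
  ∃ ω ω' : List (Fin D.n), D.IsReduced w ω ∧ ω'.Sublist ω ∧ D.wordProd ω' = u

def bruhatLT (u w : D.W) : Prop := D.bruhatLE u w ∧ u ≠ w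

/-- the inversion set `Φ_w = {α ∈ Φ₊ : w⁻¹(α) ∈ Φ₋}` -/
def invSet (w : D.W) : Set D.Λ := {v | v ∈ D.posRoots ∧ w⁻¹ • v ∈ D.negRoots}

/-- the augmentation ideal `I_F = ker ε ⊂ S` -/
def IF : Ideal D.S := RingHom.ker D.aug.toRingHom

/-- the element `c_v = Π_{α ∈ Φ_v} x_α ∈ S` -/
def cElt (v : D.W) : D.S := ∏ᶠ a ∈ D.invSet v, D.x a

/-- the image of `x_λ` in the localization `Q` -/
def xQ (v : D.Λ) : D.Q := algebraMap D.S D.Q (D.x v)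

/-- the image of `a ∈ S` in the twisted group algebra `Q_W` -/
def SQW (a : D.S) : D.QW := D.ι (algebraMap D.S D.Q a)

/-- the formal Demazure element `X_α = (1/x_α)(1 - δ_{s_α}) ∈ Q_W` -/
def Xel (v : D.Λ) : D.QW := D.ι (Ring.inverse (D.xQ v)) * (1 - D.δ (D.refl v))

/-- the formal push-pull element `Y_α = 1/x_{-α} + (1/x_α) δ_{s_α} ∈ Q_W` -/
def Yel (v : D.Λ) : D.QW := D.ι (Ring.inverse (D.xQ (-v))) + D.ι (Ring.inverse (D.xQ v)) * D.δ (D.refl v)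

/-- `X_i = X_{α_i}` -/
def Xi (i : Fin D.n) : D.QW := D.Xel (D.sroot i)

/-- `Y_i = Y_{α_i}` -/
def Yi (i : Fin D.n) : D.QW := D.Yel (D.sroot i)

/-- `X_I = X_{i_1} ⋯ X_{i_l}` for a word `I = (i_1, …, i_l)` -/
def Xword (ω : List (Fin D.n)) : D.QW := (ω.map D.Xi).prod

/-- `Y_I = Y_{i_1} ⋯ Y_{i_l}` for a word `I = (i_1, …, i_l)` -/
def Yword (ω : List (Fin D.n)) : D.QW := (ω.map D.Yi).prod

/-- the formal affine Demazure algebra `D_F`: the `R`-subalgebra of `Q_W` generated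
by `S` and the elements `X_α`, `α ∈ Φ` -/
def DF : Subalgebra R D.QW :=
  Algebra.adjoin R (Set.range D.SQW ∪ D.Xel '' D.roots)

/-- `z · S ⊆ S` for `z ∈ Q_W` -/
def PreservesS (z : D.QW) : Prop :=
  ∀ a : D.S, ∃ b : D.S, D.act z (algebraMap D.S D.Q a) = algebraMap D.S D.Q b

end DemazureSetup

end
noncomputable section
/-- The setting of Section 6:  `Γ = ℤγ` is a free abelian group of rank one,
`S' = R[[Γ ⊕ Λ]]_F` is the formal group algebra of `Γ ⊕ Λ` (with `W` acting trivially
on `Γ`), `Q' = S'[1/x_α : α ∈ Φ]` and `Q'_W = Q' ⋊_R R[W]` is the twisted group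
algebra, acting on `Q'`.  Elements of `Γ ⊕ Λ = ℤ ⊕ Λ` are recorded as pairs `(k, λ)`,
with `γ = (1,0)` and `λ = (0,λ)`. -/
structure HeckeSetup (R : Type) [CommRing R] (D : DemazureSetup R) : Type 1 where
  /-- the formal group algebra `S' = R[[Γ ⊕ Λ]]_F` -/
  S' : Type
  [S'cr : CommRing S']
  [S'alg : Algebra R S']
  /-- the generators `x_{(k,λ)}`, `(k,λ) ∈ Γ ⊕ Λ` -/
  x' : ℤ × D.Λ → S'
  x'_zero : x' 0 = 0
  /-- the augmentation map -/
  aug' : S' →ₐ[R] R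
  aug'_x : ∀ p, aug' (x' p) = 0
  x'_add : ∀ (p q : ℤ × D.Λ) (N : ℕ),
    x' (p + q) - ∑ t ∈ Finset.range N ×ˢ Finset.range N,
      algebraMap R S' (D.fgl.c t.1 t.2) * x' p ^ t.1 * x' q ^ t.2
    ∈ RingHom.ker aug'.toRingHom ^ N
  /-- `S'` is the power series ring on `x_γ` and the `x`-classes of a basis of `Λ` -/
  ψ' : S' ≃ₐ[R] MvPowerSeries (Fin (Module.finrank ℤ D.Λ + 1)) R
  ψ'_γ : ψ' (x' (1, 0)) = MvPowerSeries.X 0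
  ψ'_x : ∀ j : Fin (Module.finrank ℤ D.Λ), ψ' (x' (0, D.e j)) = MvPowerSeries.X j.succ
  aug'_ψ : ∀ a : S',
    aug' a = MvPowerSeries.constantCoeff (σ := Fin (Module.finrank ℤ D.Λ + 1)) (R := R) (ψ' a)
  /-- the `W`-action on `S'`, trivial on `Γ` -/
  [S'Wact : MulSemiringAction D.W S']
  smul_x' : ∀ (w : D.W) (p : ℤ × D.Λ), w • x' p = x' (p.1, w • p.2)
  smul_alg' : ∀ (w : D.W) (r : R), w • (algebraMap R S' r) = algebraMap R S' r
  smul_IF' : ∀ (w : D.W) (N : ℕ) (a : S'),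
    a ∈ RingHom.ker aug'.toRingHom ^ N → w • a ∈ RingHom.ker aug'.toRingHom ^ N
  /-- the localization `Q' = S'[1/x_α : α ∈ Φ]` at all real roots -/
  Q' : Type
  [Q'cr : CommRing Q']
  [Q'alg : Algebra S' Q']
  loc' : IsLocalization (Submonoid.closure
    ((fun v => x' (0, v)) '' {v | ∃ (w : D.W) (i : Fin D.n), v = w • D.sroot i})) Q'
  [Q'Wact : MulSemiringAction D.W Q']
  smul_SQ' : ∀ (w : D.W) (a : S'), w • (algebraMap S' Q' a) = algebraMap S' Q' (w • a)
  /-- the twisted group algebra `Q'_W = Q' ⋊_R R[W]` -/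
  QW' : Type
  [QW'ring : Ring QW']
  [QW'alg : Algebra R QW']
  ι' : Q' →+* QW'
  δ' : D.W →* QW'
  ι'_alg : ∀ r : R, ι' (algebraMap S' Q' (algebraMap R S' r)) = algebraMap R QW' r
  twist' : ∀ (w : D.W) (q : Q'), δ' w * ι' q = ι' (w • q) * δ' w
  qw'_free : ∀ z : QW', ∃! c : D.W →₀ Q', z = c.sum fun w q => ι' q * δ' w
  /-- the action of `Q'_W` on `Q'` -/
  act' : QW' → Q' → Q'
  act'_addl : ∀ (z z' : QW') (q : Q'), act' (z + z') q = act' z q + act' z' q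
  act'_spec : ∀ (q : Q') (w : D.W) (q' : Q'), act' (ι' q * δ' w) q' = q * (w • q')

namespace HeckeSetup

attribute [instance] S'cr S'alg S'Wact Q'cr Q'alg Q'Wact QW'ring QW'alg

variable {R : Type} [CommRing R] {D : DemazureSetup R} (H : HeckeSetup R D)

/-- the image of `x_{(k,λ)}` in the localization `Q'` -/
def xQ' (p : ℤ × D.Λ) : H.Q' := algebraMap H.S' H.Q' (H.x' p)

/-- the image of `a ∈ S'` in `Q'_W` -/
def SQW' (a : H.S') : H.QW' := H.ι' (algebraMap H.S' H.Q' a)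

/-- the formal Demazure element `X_α ∈ Q'_W` -/
def Xel' (v : D.Λ) : H.QW' := H.ι' (Ring.inverse (H.xQ' (0, v))) * (1 - H.δ' (D.refl v))

/-- the element `T_α = x_γ X_α + δ_{s_α} ∈ Q'_W` -/
def Tel (v : D.Λ) : H.QW' := H.SQW' (H.x' (1, 0)) * H.Xel' v + H.δ' (D.refl v)

/-- `T_i = T_{α_i}` -/
def Ti (i : Fin D.n) : H.QW' := H.Tel (D.sroot i)

/-- `T_I = T_{i_1} ⋯ T_{i_l}` -/
def Tword (ω : List (Fin D.n)) : H.QW' := (ω.map H.Ti).prod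

/-- the formal affine Hecke algebra `H_F`:  the `R`-subalgebra of `Q'_W` generated by
`S'` and the elements `T_1, …, T_n` -/
def HF : Subalgebra R H.QW' := Algebra.adjoin R (Set.range H.SQW' ∪ Set.range H.Ti)

end HeckeSetup
end

/-!
Since `T_i = x_γ/x_{α_i} + ((x_{α_i} - x_γ)/x_{α_i}) δ_{s_i}`, left multiplication by `T_i` sends
`Σ_v q_v δ_v` to a combination of the `δ_v` and `δ_{s_i v}`. Along a reduced word `s_i w` the
subword property keeps the support below `s_i w`, and the old coefficient of `δ_{s_i w}` vanishes
because `ℓ(s_i w) > ℓ(w)`, so the new top coefficient is `((x_{α_i} - x_γ)/x_{α_i}) · s_i(q_w)`.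
The product formula follows from `Φ_{s_i w} = {α_i} ⊔ s_i Φ_w` when `ℓ(s_i w) = ℓ(w) + 1`.

That identity rests on `ℓ(w s_i) > ℓ(w) → w α_i ∈ Φ₊`, proved from the faithful action of `W`
on `Λ` as in Humphreys, *Reflection Groups and Coxeter Groups*, Thm. 5.4: lengths change parity
under `s_i` because `det s_i = -1`, and induction on `ℓ(w)` reduces to the dihedral subgroups
`⟨s_i, s_j⟩`. There the coefficients of `(⋯ s_j s_i) α_i` obey a Chebyshev-type recursion and are
nonnegative, either because `a_{ij} a_{ji} ≥ 4` or because `(s_i s_j)^m = 1` for some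
`m ∈ {2, 3, 4, 6}`, which bounds the length of alternating words.
-/

/-- The alternating product `⋯ b a b` of `k` factors, ending in `b`. -/
def altProd {G : Type*} [Monoid G] : ℕ → G → G → G
  | 0, _, _ => 1
  | k + 1, a, b => altProd k b a * b

section altProd

variable {G : Type*} [Monoid G]

@[simp] lemma altProd_zero (a b : G) : altProd 0 a b = 1 := rfl

lemma altProd_succ (k : ℕ) (a b : G) : altProd (k + 1) a b = altProd k b a * b := rfl

lemma altProd_add_two (k : ℕ) (a b : G) : altProd (k + 2) a b = altProd k a b * (a * b) := by
  rw [altProd_succ, altProd_succ, mul_assoc]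

lemma altProd_two_mul (k : ℕ) (a b : G) : altProd (2 * k) a b = (a * b) ^ k := by
  induction k with
  | zero => simp
  | succ k ih => rw [Nat.mul_succ, altProd_add_two, ih, pow_succ]

lemma altProd_add (J K : ℕ) (a b : G) :
    altProd (J + K) a b =
      altProd J (if Even K then a else b) (if Even K then b else a) * altProd K a b := by
  induction K generalizing a b with
  | zero => simp
  | succ K ih =>
    rw [← add_assoc, altProd_succ, ih, altProd_succ, mul_assoc]
    by_cases hK : Even K <;> simp [hK, Nat.even_add_one]

lemma altProd_succ' (k : ℕ) (a b : G) :
    altProd (k + 1) a b = (if Even k then b else a) * altProd k a b := by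
  rw [add_comm, altProd_add]
  by_cases hk : Even k <;> simp [hk, altProd_succ]

end altProd

lemma pow_mul_rev_eq_one {G : Type*} [Group G] {a b : G} (ha : a * a = 1) (hb : b * b = 1)
    {m : ℕ} (h : (a * b) ^ m = 1) : (b * a) ^ m = 1 := by
  rw [← inv_eq_of_mul_eq_one_right ha, ← inv_eq_of_mul_eq_one_right hb, ← mul_inv_rev, inv_pow,
    h, inv_one]

/-- The coefficients of `(⋯ s_j s_i) α_i` in the rank-two root system with Cartan integers
`a_{ij} = -b`, `a_{ji} = -c` (see `DemazureSetup.altProd_smul_sroot`). -/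
def altCoeff (b c : ℤ) : ℕ → ℤ
  | 0 => 0
  | 1 => 1
  | k + 2 => (if Even k then c else b) * altCoeff b c (k + 1) - altCoeff b c k

@[simp] lemma altCoeff_zero (b c : ℤ) : altCoeff b c 0 = 0 := rfl

@[simp] lemma altCoeff_one (b c : ℤ) : altCoeff b c 1 = 1 := rfl

lemma altCoeff_add_two (b c : ℤ) (k : ℕ) :
    altCoeff b c (k + 2) = (if Even k then c else b) * altCoeff b c (k + 1) - altCoeff b c k :=
  rfl

lemma altCoeff_add_four (b c : ℤ) (k : ℕ) :
    altCoeff b c (k + 4) = (b * c - 2) * altCoeff b c (k + 2) - altCoeff b c k := by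
  simp only [altCoeff_add_two, Nat.even_add_one]
  by_cases hk : Even k <;> simp [hk] <;> ring

lemma altCoeff_nonneg_of_four_le {b c : ℤ} (hc : 0 ≤ c) (h4 : 4 ≤ b * c) (k : ℕ) :
    0 ≤ altCoeff b c k := by
  have key (k : ℕ) : (0 ≤ altCoeff b c k ∧ altCoeff b c k ≤ altCoeff b c (k + 2)) ∧
      (0 ≤ altCoeff b c (k + 1) ∧ altCoeff b c (k + 1) ≤ altCoeff b c (k + 3)) := by
    induction k with
    | zero =>
      refine ⟨⟨le_rfl, by simpa [altCoeff_add_two] using hc⟩, zero_le_one, ?_⟩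
      simp [altCoeff_add_two]
      nlinarith
    | succ k ih =>
      refine ⟨ih.2, ih.1.1.trans ih.1.2, ?_⟩
      have := altCoeff_add_four b c k
      nlinarith [ih.1.1, ih.1.2]
  exact (key k).1.1

/-- The rank-two Cartan data `(b, c) = (-a_{ij}, -a_{ji})` of finite type, with the order `m`
of `s_i s_j`. -/
def braidData : Finset (ℤ × ℤ × ℕ) :=
  {(0, 0, 2), (1, 1, 3), (1, 2, 4), (2, 1, 4), (1, 3, 6), (3, 1, 6)}

lemma exists_mem_braidData {b c : ℤ} (hb : 0 ≤ b) (hc : 0 ≤ c) (hbc : b = 0 ↔ c = 0)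
    (h4 : b * c < 4) : ∃ m, (b, c, m) ∈ braidData := by
  have hb3 : b ≤ 3 := by rcases eq_or_lt_of_le hc with h | h <;> [omega; nlinarith]
  have hc3 : c ≤ 3 := by rcases eq_or_lt_of_le hb with h | h <;> [omega; nlinarith]
  interval_cases b <;> interval_cases c <;> simp_all [braidData]

lemma altCoeff_nonneg_of_mem_braidData {b c : ℤ} {m : ℕ} (h : (b, c, m) ∈ braidData) :
    ∀ l ≤ m, 0 ≤ altCoeff b c l := by
  simp only [braidData, Finset.mem_insert, Finset.mem_singleton, Prod.mk.injEq] at h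
  rcases h with ⟨rfl, rfl, rfl⟩ | ⟨rfl, rfl, rfl⟩ | ⟨rfl, rfl, rfl⟩ | ⟨rfl, rfl, rfl⟩ |
    ⟨rfl, rfl, rfl⟩ | ⟨rfl, rfl, rfl⟩ <;> decide

lemma smul_ringInverse {G M : Type*} [Group G] [Semiring M] [MulSemiringAction G M] (g : G)
    (x : M) : g • Ring.inverse x = Ring.inverse (g • x) := by
  by_cases hx : IsUnit x
  · have hgx : IsUnit (g • x) := hx.map (MulSemiringAction.toRingHom G M g)
    calc g • Ring.inverse x = Ring.inverse (g • x) * ((g • x) * g • Ring.inverse x) :=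
          (Ring.inverse_mul_cancel_left _ _ hgx).symm
      _ = Ring.inverse (g • x) := by
          rw [← smul_mul', Ring.mul_inverse_cancel _ hx, smul_one, mul_one]
  · have hgx : ¬IsUnit (g • x) := fun h => hx (by
      simpa using h.map (MulSemiringAction.toRingHom G M g⁻¹))
    rw [Ring.inverse_non_unit _ hx, Ring.inverse_non_unit _ hgx, smul_zero]

namespace DemazureSetup

variable {R : Type} [CommRing R] (D : DemazureSetup R)

@[simp] lemma wordProd_nil : D.wordProd [] = 1 := rfl

@[simp] lemma wordProd_cons (i : Fin D.n) (ω : List (Fin D.n)) :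
    D.wordProd (i :: ω) = D.s i * D.wordProd ω := List.prod_cons

lemma wordProd_append (ω₁ ω₂ : List (Fin D.n)) :
    D.wordProd (ω₁ ++ ω₂) = D.wordProd ω₁ * D.wordProd ω₂ := by
  simp [wordProd]

@[simp] lemma s_inv (i : Fin D.n) : (D.s i)⁻¹ = D.s i :=
  inv_eq_of_mul_eq_one_right (D.s_sq i)

@[simp] lemma s_mul_s_mul (i : Fin D.n) (w : D.W) : D.s i * (D.s i * w) = w := by
  rw [← mul_assoc, D.s_sq, one_mul]

@[simp] lemma mul_s_mul_s (w : D.W) (i : Fin D.n) : w * D.s i * D.s i = w := by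
  rw [mul_assoc, D.s_sq, mul_one]

@[simp] lemma s_smul_s_smul (i : Fin D.n) (v : D.Λ) : D.s i • D.s i • v = v := by
  rw [← mul_smul, D.s_sq, one_smul]

lemma smul_zsmul_comm (w : D.W) (k : ℤ) (v : D.Λ) : w • k • v = k • w • v := smul_comm w k v

lemma wordProd_reverse (ω : List (Fin D.n)) : D.wordProd ω.reverse = (D.wordProd ω)⁻¹ := by
  induction ω with
  | nil => simp
  | cons i ω ih => simp [wordProd_append, ih]

lemma exists_wordProd_eq (w : D.W) : ∃ ω, D.wordProd ω = w := by
  have hw : w ∈ Subgroup.closure (Set.range D.s) := D.s_gen ▸ Subgroup.mem_top w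
  induction hw using Subgroup.closure_induction with
  | one => exact ⟨[], rfl⟩
  | mem _ hx =>
    obtain ⟨i, rfl⟩ := hx
    exact ⟨[i], by simp⟩
  | mul _ _ _ _ hx hy =>
    obtain ⟨ω₁, rfl⟩ := hx
    obtain ⟨ω₂, rfl⟩ := hy
    exact ⟨ω₁ ++ ω₂, D.wordProd_append ω₁ ω₂⟩
  | inv _ _ hx =>
    obtain ⟨ω, rfl⟩ := hx
    exact ⟨ω.reverse, D.wordProd_reverse ω⟩

lemma len_le_length {w : D.W} {ω : List (Fin D.n)} (h : D.wordProd ω = w) :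
    D.len w ≤ ω.length :=
  Nat.sInf_le ⟨ω, rfl, h⟩

lemma exists_isReduced (w : D.W) : ∃ ω, D.IsReduced w ω := by
  obtain ⟨ω, hω⟩ := D.exists_wordProd_eq w
  obtain ⟨ρ, hρl, hρ⟩ := Nat.sInf_mem (⟨ω.length, ω, rfl, hω⟩ :
    {l | ∃ ω : List (Fin D.n), ω.length = l ∧ D.wordProd ω = w}.Nonempty)
  exact ⟨ρ, hρ, hρl⟩

@[simp] lemma len_one : D.len 1 = 0 :=
  Nat.le_zero.mp (D.len_le_length (ω := []) rfl)

lemma eq_one_of_len_eq_zero {w : D.W} (h : D.len w = 0) : w = 1 := by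
  obtain ⟨ω, rfl, hl⟩ := D.exists_isReduced w
  rw [h, List.length_eq_zero_iff] at hl
  rw [hl, wordProd_nil]

lemma len_mul_le (u v : D.W) : D.len (u * v) ≤ D.len u + D.len v := by
  obtain ⟨ω₁, rfl, hl₁⟩ := D.exists_isReduced u
  obtain ⟨ω₂, rfl, hl₂⟩ := D.exists_isReduced v
  simpa [hl₁, hl₂] using D.len_le_length (ω := ω₁ ++ ω₂) (D.wordProd_append ω₁ ω₂)

lemma len_inv (w : D.W) : D.len w⁻¹ = D.len w := by
  have key (u : D.W) : D.len u⁻¹ ≤ D.len u := by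
    obtain ⟨ω, rfl, hl⟩ := D.exists_isReduced u
    simpa [hl] using D.len_le_length (D.wordProd_reverse ω)
  exact le_antisymm (key w) (by simpa using key w⁻¹)

lemma len_s_le (i : Fin D.n) : D.len (D.s i) ≤ 1 := by
  simpa using D.len_le_length (ω := [i]) (by simp)

lemma len_mul_s_le (w : D.W) (i : Fin D.n) : D.len (w * D.s i) ≤ D.len w + 1 :=
  (D.len_mul_le w (D.s i)).trans (by have := D.len_s_le i; omega)

lemma isReduced_cons {w : D.W} {i : Fin D.n} {ω : List (Fin D.n)}
    (h : D.IsReduced w (i :: ω)) :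
    w = D.s i * D.wordProd ω ∧ D.IsReduced (D.wordProd ω) ω ∧
      D.len w = D.len (D.wordProd ω) + 1 := by
  obtain ⟨rfl, hl⟩ := h
  rw [List.length_cons] at hl
  have h₁ := D.len_le_length (ω := ω) rfl
  have h₂ := D.len_mul_le (D.s i) (D.wordProd ω)
  have h₃ := D.len_s_le i
  rw [← wordProd_cons] at h₂
  exact ⟨wordProd_cons .., ⟨rfl, by omega⟩, by omega⟩

noncomputable def sign : D.W →* ℤ :=
  LinearMap.det.comp (DistribMulAction.toModuleEnd ℤ D.Λ)

lemma sign_s (i : Fin D.n) : D.sign (D.s i) = -1 := by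
  set b := Module.Free.chooseBasis ℤ D.Λ
  set c : _ → ℤ := fun l => D.scoroot i (b l)
  have hM : LinearMap.toMatrix b b (DistribMulAction.toModuleEnd ℤ D.Λ (D.s i)) =
      1 + Matrix.replicateCol Unit (-⇑(b.repr (D.sroot i))) * Matrix.replicateRow Unit c := by
    ext k l
    simp [c, LinearMap.toMatrix_apply, D.s_act, Matrix.one_apply, Finsupp.single_apply, eq_comm,
      Matrix.mul_apply, sub_eq_add_neg, mul_comm]
  have hc : c ⬝ᵥ ⇑(b.repr (D.sroot i)) = 2 := by
    calc _ = D.scoroot i (∑ k, b.repr (D.sroot i) k • b k) := by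
          simp [c, dotProduct, mul_comm, -Module.Basis.sum_repr]
      _ = 2 := by rw [b.sum_repr, D.cartan_diag]
  rw [sign, MonoidHom.comp_apply, ← LinearMap.det_toMatrix b, hM,
    Matrix.det_one_add_replicateCol_mul_replicateRow, dotProduct_neg, hc]
  norm_num

lemma sign_eq_neg_one_pow_len (w : D.W) : D.sign w = (-1) ^ D.len w := by
  obtain ⟨ω, rfl, hl⟩ := D.exists_isReduced w
  rw [← hl, wordProd, map_list_prod, List.map_map]
  simp [Function.comp_def, D.sign_s]

lemma len_mul_s (w : D.W) (i : Fin D.n) :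
    D.len (w * D.s i) = D.len w + 1 ∨ D.len w = D.len (w * D.s i) + 1 := by
  have hle := D.len_mul_s_le w i
  have hge := D.len_mul_s_le (w * D.s i) i
  have hne : D.len (w * D.s i) ≠ D.len w := fun h => by
    have : D.sign (w * D.s i) = D.sign w * -1 := by rw [map_mul, sign_s]
    rw [D.sign_eq_neg_one_pow_len, D.sign_eq_neg_one_pow_len, h] at this
    have hu : ((-1 : ℤ) ^ D.len w) ≠ 0 := pow_ne_zero _ (by norm_num)
    omega
  simp only [mul_s_mul_s] at hge
  omega

abbrev rootCone : AddSubmonoid D.Λ := AddSubmonoid.closure (Set.range D.sroot)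

lemma sroot_mem_roots (i : Fin D.n) : D.sroot i ∈ D.roots := ⟨1, i, (one_smul _ _).symm⟩

lemma smul_mem_roots (w : D.W) {v : D.Λ} (hv : v ∈ D.roots) : w • v ∈ D.roots := by
  obtain ⟨u, i, rfl⟩ := hv
  exact ⟨w * u, i, (mul_smul w u _).symm⟩

lemma sroot_mem_posRoots (i : Fin D.n) : D.sroot i ∈ D.posRoots :=
  ⟨⟨1, i, (one_smul _ _).symm⟩, AddSubmonoid.subset_closure ⟨i, rfl⟩⟩

lemma neg_mem_negRoots {v : D.Λ} (hv : v ∈ D.posRoots) : -v ∈ D.negRoots := by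
  simpa [negRoots] using hv

lemma root_ne_zero {v : D.Λ} (hv : v ∈ D.roots) : v ≠ 0 := by
  obtain ⟨u, i, rfl⟩ := hv
  rw [Ne, smul_eq_zero_iff_eq]
  exact D.roots_indep.ne_zero i

lemma sum_smul_sroot_mem_rootCone_iff (f : Fin D.n → ℤ) :
    ∑ m, f m • D.sroot m ∈ D.rootCone ↔ ∀ m, 0 ≤ f m := by
  rw [AddSubmonoid.mem_closure_range_iff_of_fintype]
  constructor
  · rintro ⟨a, ha⟩ m
    have h0 : ∑ m, (f m - a m) • D.sroot m = 0 := by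
      simp only [sub_smul, Finset.sum_sub_distrib, natCast_zsmul, ha, sub_self]
    have := Fintype.linearIndependent_iff.mp D.roots_indep _ h0 m
    omega
  · intro hf
    refine ⟨fun m => (f m).toNat, Finset.sum_congr rfl fun m _ => ?_⟩
    rw [← natCast_zsmul, Int.toNat_of_nonneg (hf m)]

lemma exists_sum_of_mem_rootCone {v : D.Λ} (hv : v ∈ D.rootCone) :
    ∃ f : Fin D.n → ℤ, v = ∑ m, f m • D.sroot m := by
  obtain ⟨a, rfl⟩ := AddSubmonoid.mem_closure_range_iff_of_fintype.mp hv
  exact ⟨fun m => a m, by simp [natCast_zsmul]⟩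

lemma notMem_negRoots_of_mem_posRoots {v : D.Λ} (hv : v ∈ D.posRoots) : v ∉ D.negRoots := by
  rintro ⟨-, hneg⟩
  obtain ⟨f, rfl⟩ := D.exists_sum_of_mem_rootCone hv.2
  have hf := (D.sum_smul_sroot_mem_rootCone_iff f).mp hv.2
  have hf' := (D.sum_smul_sroot_mem_rootCone_iff (-f)).mp
    (by simpa [neg_smul, Finset.sum_neg_distrib] using hneg)
  have hzero (m : Fin D.n) : f m = 0 := by
    have := hf m
    have := hf' m
    simp only [Pi.neg_apply] at this
    omega
  exact D.root_ne_zero hv.1 (by simp [hzero])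

/-- The simple roots are primitive in a Demazure lattice, hence so is every root. -/
lemma eq_one_or_eq_neg_one_of_zsmul_sroot_mem_roots {i : Fin D.n} {k : ℤ}
    (h : k • D.sroot i ∈ D.roots) : k = 1 ∨ k = -1 := by
  obtain ⟨w, j, hw⟩ := h
  obtain ⟨b, l, hbl⟩ := D.basis_ext j
  have h₁ : D.sroot j = k • (w⁻¹ • D.sroot i) := by
    rw [smul_comm, hw, inv_smul_smul]
  have h₂ : (1 : ℤ) = k * b.repr (w⁻¹ • D.sroot i) l := by
    simpa [← hbl, map_zsmul] using congrArg (fun x => b.repr x l) h₁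
  exact Int.isUnit_iff.mp (isUnit_of_dvd_one (Dvd.intro _ h₂.symm))

lemma len_altProd_le {a b : D.W} (ha : D.len a ≤ 1) (hb : D.len b ≤ 1) (k : ℕ) :
    D.len (altProd k a b) ≤ k := by
  induction k generalizing a b with
  | zero => simp
  | succ k ih =>
    rw [altProd_succ]
    exact (D.len_mul_le _ _).trans (by have := ih hb ha; omega)

/-- `(s_i s_j)^m = 1` turns the alternating word of length `m + 1` into one of length `m - 1`. -/
lemma len_altProd_lt {i j : Fin D.n} {m : ℕ} (hm : 1 ≤ m) (h : (D.s i * D.s j) ^ m = 1)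
    {J : ℕ} (hJ : m < J) : D.len (altProd J (D.s i) (D.s j)) < J := by
  have hi := D.len_s_le i
  have hj := D.len_s_le j
  have hshort : D.len (altProd (m + 1) (D.s i) (D.s j)) ≤ m - 1 := by
    have hsplit := altProd_add (m - 1) (m + 1) (D.s i) (D.s j)
    rw [show m - 1 + (m + 1) = 2 * m by omega, altProd_two_mul, h] at hsplit
    rw [eq_inv_of_mul_eq_one_right hsplit.symm, len_inv]
    exact D.len_altProd_le (by split <;> assumption) (by split <;> assumption) _
  rw [← Nat.sub_add_cancel hJ, altProd_add]
  calc _ ≤ (J - (m + 1)) + (m - 1) := (D.len_mul_le _ _).trans <| add_le_add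
        (D.len_altProd_le (by split <;> assumption) (by split <;> assumption) _) hshort
    _ < J - (m + 1) + (m + 1) := by omega

def negCartan (i j : Fin D.n) : ℤ := -D.scoroot i (D.sroot j)

lemma negCartan_nonneg {i j : Fin D.n} (hij : i ≠ j) : 0 ≤ D.negCartan i j := by
  have := D.cartan_off i j hij
  rw [negCartan]
  omega

@[simp] lemma negCartan_self (i : Fin D.n) : D.negCartan i i = -2 := by
  rw [negCartan, D.cartan_diag]

lemma s_smul_sroot (i j : Fin D.n) :
    D.s j • D.sroot i = D.sroot i + D.negCartan j i • D.sroot j := by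
  rw [D.s_act, negCartan, neg_smul, sub_eq_add_neg]

lemma s_smul_sroot_self (i : Fin D.n) : D.s i • D.sroot i = -D.sroot i := by
  rw [D.s_act, D.cartan_diag]
  module

lemma altProd_smul_sroot (i j : Fin D.n) (k : ℕ) :
    altProd k (D.s i) (D.s j) • D.sroot i =
      let r := altCoeff (D.negCartan i j) (D.negCartan j i)
      if Even k then r (k + 1) • D.sroot i + r k • D.sroot j
      else r (k + 1) • D.sroot j + r k • D.sroot i := by
  induction k with
  | zero => simp
  | succ k ih =>
    rw [altProd_succ', mul_smul, ih]
    by_cases hk : Even k <;>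
    · simp only [hk, Nat.even_add_one, not_true_eq_false, not_false_eq_true, if_true, if_false,
        smul_add, smul_zsmul_comm, D.s_smul_sroot, negCartan_self, altCoeff_add_two]
      module

lemma s_mul_s_smul (i j : Fin D.n) (lam : D.Λ) (p q : ℤ) :
    (D.s i * D.s j) • (lam + p • D.sroot i + q • D.sroot j) =
      let q' := D.negCartan j i * p - q - D.scoroot j lam
      lam + (D.negCartan i j * q' - p - D.scoroot i lam) • D.sroot i + q' • D.sroot j := by
  simp only [mul_smul, D.s_act, map_add, map_sub, map_zsmul, smul_eq_mul, D.cartan_diag,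
    negCartan]
  module

lemma s_mul_s_pow_eq_one {i j : Fin D.n} {m : ℕ}
    (h : (D.negCartan i j, D.negCartan j i, m) ∈ braidData) : (D.s i * D.s j) ^ m = 1 := by
  refine D.act_faithful _ fun lam => ?_
  -- in this shape `s_mul_s_smul` rewrites every iterate
  have hlam : lam = lam + (0 : ℤ) • D.sroot i + (0 : ℤ) • D.sroot j := by simp
  simp only [braidData, Finset.mem_insert, Finset.mem_singleton, Prod.mk.injEq] at h
  rcases h with ⟨hb, hc, rfl⟩ | ⟨hb, hc, rfl⟩ | ⟨hb, hc, rfl⟩ | ⟨hb, hc, rfl⟩ |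
    ⟨hb, hc, rfl⟩ | ⟨hb, hc, rfl⟩ <;>
  · conv_lhs => rw [hlam]
    simp only [pow_succ, pow_zero, one_mul, mul_smul]
    simp only [← mul_smul, s_mul_s_smul, hb, hc]
    module

/-- Either `a_{ij} a_{ji} ≥ 4` and all the coefficients `altCoeff` are nonnegative, or
`(s_j s_i)^m = 1` for some `m`, the reduced word `s_i ⋯ s_j s_i` has length `k + 1 ≤ m`, and
the first `m` coefficients are nonnegative. -/
lemma exists_altProd_smul_sroot_eq {i j : Fin D.n} (hij : i ≠ j) {k : ℕ}
    (hk : D.len (altProd (k + 1) (D.s j) (D.s i)) = k + 1) :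
    ∃ p q : ℕ,
      altProd k (D.s i) (D.s j) • D.sroot i = (p : ℤ) • D.sroot i + (q : ℤ) • D.sroot j := by
  set r := altCoeff (D.negCartan i j) (D.negCartan j i)
  have hb := D.negCartan_nonneg hij
  have hc := D.negCartan_nonneg hij.symm
  have hnn : ∀ l ≤ k + 1, 0 ≤ r l := by
    by_cases h4 : 4 ≤ D.negCartan i j * D.negCartan j i
    · exact fun l _ => altCoeff_nonneg_of_four_le hc h4 l
    obtain ⟨m, hm⟩ := exists_mem_braidData hb hc
      (by simp only [negCartan, neg_eq_zero, D.cartan_zero]) (by omega)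
    have hm1 : 1 ≤ m := by
      simp only [braidData, Finset.mem_insert, Finset.mem_singleton, Prod.mk.injEq] at hm
      omega
    have hbr := pow_mul_rev_eq_one (D.s_sq i) (D.s_sq j) (D.s_mul_s_pow_eq_one hm)
    have hkm : k + 1 ≤ m := by
      by_contra hlt
      have := D.len_altProd_lt hm1 hbr (J := k + 1) (by omega)
      omega
    exact fun l hl => altCoeff_nonneg_of_mem_braidData hm l (by omega)
  have hk0 := Int.toNat_of_nonneg (hnn k (by omega))
  have hk1 := Int.toNat_of_nonneg (hnn (k + 1) le_rfl)
  rw [D.altProd_smul_sroot]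
  by_cases he : Even k
  · exact ⟨(r (k + 1)).toNat, (r k).toNat, by simp only [he, if_true, hk0, hk1, r]⟩
  · exact ⟨(r k).toNat, (r (k + 1)).toNat, by simp only [he, if_false, hk0, hk1, r, add_comm]⟩

lemma exists_len_mul_s_lt {w : D.W} (hw : w ≠ 1) : ∃ t, D.len (w * D.s t) < D.len w := by
  obtain ⟨ω, hω⟩ := D.exists_isReduced w⁻¹
  cases ω with
  | nil => exact absurd (inv_eq_one.mp hω.1.symm) hw
  | cons t ω =>
    obtain ⟨hwt, -, hl⟩ := D.isReduced_cons hω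
    refine ⟨t, ?_⟩
    rw [show w * D.s t = (D.wordProd ω)⁻¹ by rw [← inv_inv w, hwt]; group, len_inv,
      ← D.len_inv w, hl]
    omega

/-- Peels off the longest alternating suffix `⋯ s_i s_j` of `w`. -/
lemma exists_eq_mul_altProd {w : D.W} {i j : Fin D.n} (hj : D.len (w * D.s j) < D.len w) :
    ∃ (v : D.W) (k : ℕ), 0 < k ∧ w = v * altProd k (D.s i) (D.s j) ∧ D.len w = D.len v + k ∧
      D.len v < D.len (v * D.s i) ∧ D.len v < D.len (v * D.s j) := by
  obtain ⟨N, hN⟩ : ∃ N, D.len w = N := ⟨_, rfl⟩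
  induction N using Nat.strong_induction_on generalizing w i j with
  | _ N ih =>
    obtain ⟨w, rfl⟩ : ∃ w₁, w = w₁ * D.s j := ⟨w * D.s j, (D.mul_s_mul_s w j).symm⟩
    rw [mul_s_mul_s] at hj
    have hj' := D.len_mul_s_le w j
    rcases D.len_mul_s w i with hi | hi
    · exact ⟨w, 1, one_pos, by rw [altProd_succ, altProd_zero, one_mul], by omega, by omega, hj⟩
    · obtain ⟨v, k, -, rfl, hlen, hvj, hvi⟩ :=
        ih (D.len w) (by omega) (i := j) (j := i) (by omega) rfl
      exact ⟨v, k + 1, k.succ_pos, by rw [mul_assoc, ← altProd_succ], by omega, hvi, hvj⟩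

lemma smul_sroot_mem_posRoots_of_len_lt {w : D.W} {i : Fin D.n}
    (hi : D.len w < D.len (w * D.s i)) : w • D.sroot i ∈ D.posRoots := by
  obtain ⟨N, hN⟩ : ∃ N, D.len w = N := ⟨_, rfl⟩
  induction N using Nat.strong_induction_on generalizing w i with
  | _ N ih =>
    by_cases hw : w = 1
    · rw [hw, one_smul]
      exact D.sroot_mem_posRoots i
    obtain ⟨t, ht⟩ := D.exists_len_mul_s_lt hw
    have hit : i ≠ t := by rintro rfl; omega
    obtain ⟨v, k, hk0, rfl, hlen, hvi, hvt⟩ := D.exists_eq_mul_altProd (i := i) ht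
    have hk : D.len (altProd (k + 1) (D.s t) (D.s i)) = k + 1 := by
      have h₁ := D.len_altProd_le (D.len_s_le t) (D.len_s_le i) (k + 1)
      have h₂ := D.len_mul_le v (altProd k (D.s i) (D.s t) * D.s i)
      rw [← mul_assoc] at h₂
      rw [altProd_succ] at h₁ ⊢
      omega
    obtain ⟨p, q, hpq⟩ := D.exists_altProd_smul_sroot_eq hit hk
    refine ⟨⟨_, i, rfl⟩, ?_⟩
    rw [mul_smul, hpq, smul_add, smul_zsmul_comm, smul_zsmul_comm, natCast_zsmul,
      natCast_zsmul]
    have hv : D.len v < N := by omega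
    exact add_mem (nsmul_mem (ih _ hv hvi rfl).2 p) (nsmul_mem (ih _ hv hvt rfl).2 q)

lemma smul_sroot_mem_negRoots_of_lt_len {w : D.W} {i : Fin D.n}
    (hi : D.len (w * D.s i) < D.len w) : w • D.sroot i ∈ D.negRoots := by
  have hpos := D.smul_sroot_mem_posRoots_of_len_lt (w := w * D.s i) (i := i)
    (by rw [mul_s_mul_s]; exact hi)
  rw [mul_smul, D.s_smul_sroot_self, smul_neg] at hpos
  simpa [negRoots] using hpos

lemma mem_posRoots_or_mem_negRoots {v : D.Λ} (hv : v ∈ D.roots) :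
    v ∈ D.posRoots ∨ v ∈ D.negRoots := by
  obtain ⟨w, i, rfl⟩ := hv
  rcases D.len_mul_s w i with h | h
  · exact .inl (D.smul_sroot_mem_posRoots_of_len_lt (by omega))
  · exact .inr (D.smul_sroot_mem_negRoots_of_lt_len (by omega))

lemma coeffs_nonneg_or_nonpos {f : Fin D.n → ℤ} (hf : ∑ m, f m • D.sroot m ∈ D.roots) :
    (∀ m, 0 ≤ f m) ∨ ∀ m, f m ≤ 0 := by
  rcases D.mem_posRoots_or_mem_negRoots hf with h | h
  · exact .inl ((D.sum_smul_sroot_mem_rootCone_iff f).mp h.2)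
  · refine .inr fun m => ?_
    have := (D.sum_smul_sroot_mem_rootCone_iff (-f)).mp
      (by simpa [neg_smul, Finset.sum_neg_distrib] using h.2) m
    simp only [Pi.neg_apply] at this
    omega

lemma eq_one_of_forall_smul_sroot_mem_posRoots {w : D.W} (h : ∀ m, w • D.sroot m ∈ D.posRoots) :
    w = 1 := by
  by_contra hw
  obtain ⟨t, ht⟩ := D.exists_len_mul_s_lt hw
  exact D.notMem_negRoots_of_mem_posRoots (h t) (D.smul_sroot_mem_negRoots_of_lt_len ht)

lemma s_smul_mem_posRoots {i : Fin D.n} {v : D.Λ} (hv : v ∈ D.posRoots) (hne : v ≠ D.sroot i) :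
    D.s i • v ∈ D.posRoots := by
  obtain ⟨f, rfl⟩ := D.exists_sum_of_mem_rootCone hv.2
  have hf := (D.sum_smul_sroot_mem_rootCone_iff f).mp hv.2
  set g : Fin D.n → ℤ := f - Pi.single i (D.scoroot i (∑ m, f m • D.sroot m))
  have hg : D.s i • ∑ m, f m • D.sroot m = ∑ m, g m • D.sroot m := by
    simp [g, D.s_act, sub_smul, Finset.sum_sub_distrib, Pi.single_apply]
  have hroot := D.smul_mem_roots (D.s i) hv.1
  rw [hg] at hroot ⊢
  rcases D.coeffs_nonneg_or_nonpos hroot with hpos | hneg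
  · exact ⟨hroot, (D.sum_smul_sroot_mem_rootCone_iff g).mpr hpos⟩
  exfalso
  have hzero (m : Fin D.n) (hm : m ≠ i) : f m = 0 := by
    have := hneg m
    simp only [g, Pi.sub_apply, Pi.single_eq_of_ne hm, sub_zero] at this
    exact le_antisymm this (hf m)
  have hv' : ∑ m, f m • D.sroot m = f i • D.sroot i :=
    Fintype.sum_eq_single i fun m hm => by rw [hzero m hm, zero_smul]
  rw [hv'] at hne hv
  rcases D.eq_one_or_eq_neg_one_of_zsmul_sroot_mem_roots hv.1 with h | h
  · exact hne (by rw [h, one_smul])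
  · have := hf i
    omega

@[simp] lemma invSet_one : D.invSet 1 = ∅ :=
  Set.eq_empty_of_forall_notMem fun _ ⟨hv, hneg⟩ =>
    D.notMem_negRoots_of_mem_posRoots hv (by simpa using hneg)

lemma sroot_notMem_s_smul_invSet (i : Fin D.n) (w : D.W) :
    D.sroot i ∉ (D.s i • ·) '' D.invSet w := by
  rintro ⟨v, ⟨hv, -⟩, hvi⟩
  dsimp only at hvi
  rw [← D.s_smul_s_smul i v, hvi, D.s_smul_sroot_self] at hv
  exact D.notMem_negRoots_of_mem_posRoots hv (D.neg_mem_negRoots (D.sroot_mem_posRoots i))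

lemma invSet_s_mul {i : Fin D.n} {w : D.W} (hlen : D.len (D.s i * w) = D.len w + 1) :
    D.invSet (D.s i * w) = insert (D.sroot i) ((D.s i • ·) '' D.invSet w) := by
  have hinv : (D.s i * w)⁻¹ = w⁻¹ * D.s i := by simp
  have hpos : w⁻¹ • D.sroot i ∈ D.posRoots :=
    D.smul_sroot_mem_posRoots_of_len_lt (by rw [← hinv, len_inv, len_inv, hlen]; omega)
  ext v
  simp only [invSet, hinv, mul_smul, Set.mem_insert_iff, Set.mem_image, Set.mem_ofPred_eq]
  constructor
  · rintro ⟨hv, hneg⟩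
    by_cases hvi : v = D.sroot i
    · exact .inl hvi
    · exact .inr ⟨D.s i • v, ⟨D.s_smul_mem_posRoots hv hvi, hneg⟩, D.s_smul_s_smul i v⟩
  · rintro (rfl | ⟨u, ⟨hu, hneg⟩, rfl⟩)
    · refine ⟨D.sroot_mem_posRoots i, ?_⟩
      rw [D.s_smul_sroot_self, smul_neg]
      exact D.neg_mem_negRoots hpos
    · have hui : u ≠ D.sroot i := by
        rintro rfl
        exact D.notMem_negRoots_of_mem_posRoots hpos hneg
      exact ⟨D.s_smul_mem_posRoots hu hui, by rwa [s_smul_s_smul]⟩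

lemma invSet_finite (w : D.W) : (D.invSet w).Finite := by
  obtain ⟨ω, hω⟩ := D.exists_isReduced w
  induction ω generalizing w with
  | nil => simp [← hω.1]
  | cons i ω ih =>
    obtain ⟨rfl, hred, hlen⟩ := D.isReduced_cons hω
    rw [D.invSet_s_mul hlen]
    exact ((ih _ hred).image _).insert _

lemma finprod_invSet_s_mul {M : Type*} [CommMonoid M] [MulDistribMulAction D.W M]
    {f : D.Λ → M} (hf : ∀ (w : D.W) v, w • f v = f (w • v)) {i : Fin D.n} {w : D.W}
    (hlen : D.len (D.s i * w) = D.len w + 1) :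
    ∏ᶠ v ∈ D.invSet (D.s i * w), f v = f (D.sroot i) * D.s i • ∏ᶠ v ∈ D.invSet w, f v := by
  rw [D.invSet_s_mul hlen, finprod_mem_insert _ (D.sroot_notMem_s_smul_invSet i w)
      ((D.invSet_finite w).image _), finprod_mem_image (MulAction.injective (D.s i)).injOn]
  congr 1
  calc ∏ᶠ v ∈ D.invSet w, f (D.s i • v) = ∏ᶠ v ∈ D.invSet w, D.s i • f v := by simp only [hf]
    _ = D.s i • ∏ᶠ v ∈ D.invSet w, f v :=
      ((MulDistribMulAction.toMonoidHom M (D.s i)).map_finprod_mem f (D.invSet_finite w)).symm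

lemma nonneg_of_sroot_add_zsmul_mem_roots {i m : Fin D.n} (hmi : m ≠ i) {K : ℤ}
    (h : D.sroot m + K • D.sroot i ∈ D.roots) : 0 ≤ K := by
  have hsum : ∑ l, (Pi.single m 1 + Pi.single i K : Fin D.n → ℤ) l • D.sroot l =
      D.sroot m + K • D.sroot i := by
    simp [add_smul, Finset.sum_add_distrib, Pi.single_apply]
  rw [← hsum] at h
  rcases D.coeffs_nonneg_or_nonpos h with h | h
  · simpa [hmi.symm] using h i
  · simpa [hmi] using h m

/-- `u = w s_j w⁻¹ s_i` acts by `λ ↦ λ + h(λ) α_i`; since `u^{±1} α_m = α_m ± h(α_m) α_i` are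
roots, the sign dichotomy forces `h(α_m) = 0`, so `u` fixes every simple root and `u = 1`. -/
lemma mul_s_mul_inv_eq_s {i j : Fin D.n} {w : D.W} (hw : w • D.sroot j = D.sroot i) :
    w * D.s j * w⁻¹ = D.s i := by
  have hw' : w⁻¹ • D.sroot i = D.sroot j := by rw [← hw, inv_smul_smul]
  set h : D.Λ →+ ℤ :=
    D.scoroot i - (D.scoroot j).comp (DistribSMul.toAddMonoidHom D.Λ w⁻¹)
  have hαi : h (D.sroot i) = 0 := by
    simp [h, hw', D.cartan_diag]
  set u := w * D.s j * w⁻¹ * D.s i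
  have hu (lam : D.Λ) : u • lam = lam + h lam • D.sroot i := by
    simp only [u, h, mul_smul, D.s_act, smul_sub, smul_zsmul_comm, map_zsmul, hw, hw',
      smul_inv_smul, D.cartan_diag, AddMonoidHom.sub_apply, AddMonoidHom.comp_apply,
      DistribSMul.toAddMonoidHom_apply, smul_eq_mul]
    module
  have hu_inv (lam : D.Λ) : u⁻¹ • lam = lam - h lam • D.sroot i := by
    rw [inv_smul_eq_iff, hu, map_sub, map_zsmul, hαi, smul_zero, sub_zero, sub_add_cancel]
  have hsimple (m : Fin D.n) : h (D.sroot m) = 0 := by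
    rcases eq_or_ne m i with rfl | hmi
    · exact hαi
    have h₁ := D.nonneg_of_sroot_add_zsmul_mem_roots hmi (K := h (D.sroot m))
      (by rw [← hu]; exact D.smul_mem_roots u (D.sroot_mem_roots m))
    have h₂ := D.nonneg_of_sroot_add_zsmul_mem_roots hmi (K := -h (D.sroot m))
      (by rw [neg_smul, ← sub_eq_add_neg, ← hu_inv]; exact D.smul_mem_roots _ (D.sroot_mem_roots m))
    omega
  have hu1 : u = 1 := D.eq_one_of_forall_smul_sroot_mem_posRoots fun m => by
    rw [hu, hsimple, zero_smul, add_zero]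
    exact D.sroot_mem_posRoots m
  rw [← D.s_inv i]
  exact mul_eq_one_iff_eq_inv.mp hu1

lemma refl_sroot (i : Fin D.n) : D.refl (D.sroot i) = D.s i := by
  have hmem := D.sroot_mem_roots i
  rw [refl, dif_pos hmem]
  exact D.mul_s_mul_inv_eq_s hmem.choose_spec.choose_spec.symm

lemma bruhatLE_refl (w : D.W) : D.bruhatLE w w := by
  obtain ⟨ω, hω⟩ := D.exists_isReduced w
  exact ⟨ω, ω, hω, List.Sublist.refl ω, hω.1⟩

lemma len_le_of_bruhatLE {v w : D.W} (h : D.bruhatLE v w) : D.len v ≤ D.len w := by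
  obtain ⟨ω, ω', hred, hsub, rfl⟩ := h
  exact (D.len_le_length rfl).trans (hred.2 ▸ hsub.length_le)

lemma bruhatLE_s_mul {i : Fin D.n} {v w : D.W} (hlen : D.len (D.s i * w) = D.len w + 1)
    (h : D.bruhatLE v w) : D.bruhatLE v (D.s i * w) ∧ D.bruhatLE (D.s i * v) (D.s i * w) := by
  obtain ⟨ω, ω', ⟨rfl, hl⟩, hsub, rfl⟩ := h
  have hred : D.IsReduced (D.s i * D.wordProd ω) (i :: ω) := ⟨rfl, by simp [hl, hlen]⟩
  exact ⟨⟨i :: ω, ω', hred, hsub.cons i, rfl⟩, ⟨i :: ω, i :: ω', hred, hsub.cons_cons i, rfl⟩⟩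

end DemazureSetup

namespace HeckeSetup

variable {R : Type} [CommRing R] {D : DemazureSetup R} (H : HeckeSetup R D)

noncomputable def rootFactor (v : D.Λ) : H.Q' :=
  (H.xQ' (0, v) - H.xQ' (1, 0)) * Ring.inverse (H.xQ' (0, v))

noncomputable def deltaSum (q : D.W →₀ H.Q') : H.QW' := q.sum fun v c => H.ι' c * H.δ' v

lemma xQ'_isUnit {v : D.Λ} (hv : v ∈ D.roots) : IsUnit (H.xQ' (0, v)) := by
  have : IsLocalization (Submonoid.closure ((fun v => H.x' (0, v)) '' D.roots)) H.Q' := H.loc'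
  exact IsLocalization.map_units H.Q'
    (⟨H.x' (0, v), Submonoid.subset_closure (Set.mem_image_of_mem (fun v => H.x' (0, v)) hv)⟩ :
      Submonoid.closure _)

lemma smul_xQ' (w : D.W) (p : ℤ × D.Λ) : w • H.xQ' p = H.xQ' (p.1, w • p.2) := by
  rw [xQ', H.smul_SQ', H.smul_x', xQ']

lemma smul_rootFactor (w : D.W) (v : D.Λ) : w • H.rootFactor v = H.rootFactor (w • v) := by
  rw [rootFactor, smul_mul', smul_sub, smul_ringInverse, H.smul_xQ', H.smul_xQ', smul_zero,
    rootFactor]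

lemma Ti_eq (i : Fin D.n) :
    H.Ti i = H.ι' (1 - H.rootFactor (D.sroot i)) +
      H.ι' (H.rootFactor (D.sroot i)) * H.δ' (D.s i) := by
  rw [Ti, Tel, Xel', D.refl_sroot, rootFactor, sub_mul,
    Ring.mul_inverse_cancel _ (H.xQ'_isUnit (D.sroot_mem_roots i)), SQW', ← xQ']
  simp only [map_sub, map_one, map_mul]
  noncomm_ring

lemma Tword_cons (i : Fin D.n) (ω : List (Fin D.n)) :
    H.Tword (i :: ω) = H.Ti i * H.Tword ω := by
  simp [Tword]

noncomputable def TiCoeffs (i : Fin D.n) (q : D.W →₀ H.Q') : D.W →₀ H.Q' :=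
  q.mapRange ((1 - H.rootFactor (D.sroot i)) * ·) (mul_zero _) +
    (q.mapRange (fun a => H.rootFactor (D.sroot i) * D.s i • a) (by simp)).equivMapDomain
      (Equiv.mulLeft (D.s i))

lemma TiCoeffs_apply (i : Fin D.n) (q : D.W →₀ H.Q') (v : D.W) :
    H.TiCoeffs i q v = (1 - H.rootFactor (D.sroot i)) * q v +
      H.rootFactor (D.sroot i) * D.s i • q (D.s i * v) := by
  simp [TiCoeffs, Finsupp.equivMapDomain_apply]

lemma Ti_mul_deltaSum (i : Fin D.n) (q : D.W →₀ H.Q') :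
    H.Ti i * H.deltaSum q = H.deltaSum (H.TiCoeffs i q) := by
  have h0 (v : D.W) : H.ι' 0 * H.δ' v = 0 := by simp
  rw [deltaSum, deltaSum, TiCoeffs, Finsupp.sum_add_index' h0 (fun _ _ _ => by simp [add_mul]),
    Finsupp.sum_mapRange_index h0, Finsupp.sum_equivMapDomain,
    Finsupp.sum_mapRange_index fun _ => h0 _,
    Ti_eq, add_mul, Finsupp.mul_sum, Finsupp.mul_sum]
  congr 1 <;> refine Finsupp.sum_congr fun v _ => ?_
  · simp only [map_mul, mul_assoc]
  · rw [Equiv.coe_mulLeft, map_mul, map_mul, mul_assoc, ← mul_assoc (H.δ' _), H.twist']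
    simp only [mul_assoc]

lemma mem_support_TiCoeffs {i : Fin D.n} {q : D.W →₀ H.Q'} {v : D.W}
    (hv : v ∈ (H.TiCoeffs i q).support) : v ∈ q.support ∨ D.s i * v ∈ q.support := by
  by_contra h
  simp_all [TiCoeffs_apply]

end HeckeSetup

/-- **Lemma 6.2**:  for any `w ∈ W` and any reduced word `I_w` of `w`, one has
`T_{I_w} = Σ_{v ≤ w} q_{I_w,v} δ_v` in `Q'_W` with all `q_{I_w,v} ∈ Q'`, the sum over
`v ≤ w` in the Bruhat order, and top coefficient
`q_{I_w,w} = Π_{α ∈ Φ_w} (x_α - x_γ)/x_α`. -/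
theorem Tword_delta_expansion
    {R : Type} [CommRing R] (D : DemazureSetup R) (H : HeckeSetup R D)
    (w : D.W) (ω : List (Fin D.n)) (hω : D.IsReduced w ω) :
    ∃ q : D.W →₀ H.Q',
      (∀ v ∈ q.support, D.bruhatLE v w) ∧
      H.Tword ω = q.sum (fun v c => H.ι' c * H.δ' v) ∧
      q w = ∏ᶠ a ∈ D.invSet w,
        (H.xQ' (0, a) - H.xQ' (1, 0)) * Ring.inverse (H.xQ' (0, a)) := by
  induction ω generalizing w with
  | nil =>
    obtain rfl : w = 1 := hω.1.symm
    refine ⟨Finsupp.single 1 1, fun v hv => ?_, by simp [HeckeSetup.Tword], by simp⟩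
    rw [Finsupp.mem_support_single] at hv
    exact hv.1 ▸ D.bruhatLE_refl 1
  | cons i ω ih =>
    obtain ⟨rfl, hred, hlen⟩ := D.isReduced_cons hω
    obtain ⟨q, hsupp, hsum, htop⟩ := ih _ hred
    have hq : q (D.s i * D.wordProd ω) = 0 := Finsupp.notMem_support_iff.mp fun h => by
      have := D.len_le_of_bruhatLE (hsupp _ h)
      omega
    refine ⟨H.TiCoeffs i q, fun v hv => ?_, ?_, ?_⟩
    · rcases H.mem_support_TiCoeffs hv with h | h
      · exact (D.bruhatLE_s_mul hlen (hsupp v h)).1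
      · simpa using (D.bruhatLE_s_mul hlen (hsupp _ h)).2
    · rw [H.Tword_cons, hsum]
      exact H.Ti_mul_deltaSum i q
    · rw [H.TiCoeffs_apply, hq, mul_zero, zero_add, D.s_mul_s_mul, htop]
      exact (D.finprod_invSet_s_mul H.smul_rootFactor hlen).symm
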